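/- Suppose G is Ramsey-minimal for (K_a, H₂) where a ≥ 3 and H₂ is a graph with minimum degree at least 2; that is, G → (K_a, H₂) but G' ↛ (K_a, H₂) for every proper subgraph G' ⊊ G. Then δ(G) ≥ 2(a-1). -/
import Mathlib


open Finset
open scoped Classical

/-- A hypergraph is given by its (finite) edge set; its vertex set is the
union of its edges. -/
abbrev HG := Finset (Finset ℕ)

namespace HG

/-- The vertex set of a hypergraph. -/
def vset (H : HG) : Finset ℕ := H.sup id

/-- Number of vertices. -/
def nV (H : HG) : ℕ := (vset H).card

/-- Number of edges. -/
def nE (H : HG) : ℕ := H.card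

/-- `H` is `k`-uniform. -/
def IsUniform (k : ℕ) (H : HG) : Prop := ∀ e ∈ H, e.card = k

/-- The density `e(H)/v(H)` (junk value `0` when `H` is empty). -/
noncomputable def dens (H : HG) : ℝ := (nE H : ℝ) / (nV H : ℝ)

/-- The maximum density `m(H) = max_{J ⊆ H} d(J)`. -/
noncomputable def maxDens (H : HG) : ℝ :=
  H.powerset.sup' ⟨∅, Finset.empty_mem_powerset H⟩ dens

/-- `d₁(H) = e(H)/(v(H)-1)` if `v(H) ≥ 2`, else `0`. -/
noncomputable def d1 (H : HG) : ℝ :=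
  if 2 ≤ nV H then (nE H : ℝ) / ((nV H : ℝ) - 1) else 0

/-- The arboricity (`1`-density) `ar(H) = m₁(H) = max_{J ⊆ H} d₁(J)`. -/
noncomputable def ar (H : HG) : ℝ :=
  H.powerset.sup' ⟨∅, Finset.empty_mem_powerset H⟩ d1

/-- `d_k(H) = (e(H)-1)/(v(H)-k)` for non-empty `H` with `v(H) ≥ k+1`,
`1/k` for a single `k`-edge, and `0` otherwise. -/
noncomputable def dK (k : ℕ) (H : HG) : ℝ :=
  if H.Nonempty ∧ k + 1 ≤ nV H then ((nE H : ℝ) - 1) / ((nV H : ℝ) - (k : ℝ))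
  else if nE H = 1 ∧ nV H = k then 1 / (k : ℝ)
  else 0

/-- The `k`-density `m_k(H) = max_{J ⊆ H} d_k(J)`. -/
noncomputable def mK (k : ℕ) (H : HG) : ℝ :=
  H.powerset.sup' ⟨∅, Finset.empty_mem_powerset H⟩ (dK k)

/-- The asymmetric density
`d_k(H₁,H₂) = e(H₁)/(v(H₁) - k + 1/m_k(H₂))` when `H₂` is non-empty and
`v(H₁) ≥ k`, else `0`. -/
noncomputable def dKK (k : ℕ) (H1 H2 : HG) : ℝ :=
  if H2.Nonempty ∧ k ≤ nV H1 then
    (nE H1 : ℝ) / ((nV H1 : ℝ) - (k : ℝ) + 1 / mK k H2)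
  else 0

/-- The asymmetric `k`-density `m_k(H₁,H₂) = max_{J ⊆ H₁} d_k(J,H₂)`. -/
noncomputable def mKK (k : ℕ) (H1 H2 : HG) : ℝ :=
  H1.powerset.sup' ⟨∅, Finset.empty_mem_powerset H1⟩ (fun J => dKK k J H2)

/-- `K` is a copy of `H` (image of `H` under an injection of its vertices). -/
def IsCopy (H K : HG) : Prop :=
  ∃ f : ℕ → ℕ, Set.InjOn f (vset H) ∧ K = H.image (fun e => e.image f)

/-- Degree of a vertex. -/
def deg (H : HG) (v : ℕ) : ℕ := (H.filter (fun e => v ∈ e)).card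

/-- Minimum degree `δ(H)` (junk value `0` for the empty hypergraph). -/
noncomputable def minDeg (H : HG) : ℕ :=
  if h : (vset H).Nonempty then (vset H).inf' h (deg H) else 0

/-- `δ_max(G) = max_{G' ⊆ G} δ(G')`. -/
noncomputable def maxMinDeg (G : HG) : ℕ := G.powerset.sup minDeg

/-- `H` is strictly `k`-balanced. -/
def StrictBal (k : ℕ) (H : HG) : Prop := ∀ J : HG, J ⊂ H → dK k J < mK k H

/-- `H₁` is strictly balanced with respect to `d_k(·, H₂)`. -/
def StrictBalWrt (k : ℕ) (H1 H2 : HG) : Prop :=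
  ∀ J : HG, J ⊂ H1 → dKK k J H2 < mKK k H1 H2

/-- `H` is connected. -/
def Conn (H : HG) : Prop :=
  ∀ u ∈ vset H, ∀ v ∈ vset H,
    Relation.ReflTransGen (fun a b => ∃ e ∈ H, a ∈ e ∧ b ∈ e) u v

end HG

open HG
/-- The complete graph on `a` vertices (as an edge set of `2`-subsets). -/
def completeK (a : ℕ) : HG := Finset.powersetCard 2 (Finset.range a)

/-- `G → (H₁, H₂)`: every red/blue edge colouring yields a red copy of `H₁`
or a blue copy of `H₂`. -/
def Arrow2 (G H1 H2 : HG) : Prop :=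
  ∀ c : Finset ℕ → Bool,
    (∃ K : HG, IsCopy H1 K ∧ K ⊆ G ∧ ∀ e ∈ K, c e = true) ∨
    (∃ K : HG, IsCopy H2 K ∧ K ⊆ G ∧ ∀ e ∈ K, c e = false)

section Helpers

lemma mem_vset {H : HG} {x : ℕ} : x ∈ vset H ↔ ∃ e ∈ H, x ∈ e := by
  simp [HG.vset, Finset.mem_sup, id]

lemma mem_completeK {a : ℕ} {e : Finset ℕ} :
    e ∈ completeK a ↔ e ⊆ Finset.range a ∧ e.card = 2 := by
  simp [completeK, Finset.mem_powersetCard]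

lemma pair_mem_completeK {a i j : ℕ} (hi : i < a) (hj : j < a) (hij : i ≠ j) :
    ({i, j} : Finset ℕ) ∈ completeK a := by
  rw [mem_completeK]
  constructor
  · intro x hx
    simp only [Finset.mem_insert, Finset.mem_singleton] at hx
    rcases hx with rfl | rfl <;> simp [Finset.mem_range, hi, hj]
  · rw [Finset.card_insert_of_notMem (by simp [hij]), Finset.card_singleton]

lemma vset_completeK {a : ℕ} (ha : 2 ≤ a) : vset (completeK a) = Finset.range a := by
  apply Finset.Subset.antisymm
  · intro x hx
    rcases mem_vset.1 hx with ⟨e, he, hxe⟩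
    exact (mem_completeK.1 he).1 hxe
  · intro i hi
    rw [Finset.mem_range] at hi
    rcases Nat.eq_zero_or_pos i with rfl | hpos
    · exact mem_vset.2 ⟨{0, 1}, pair_mem_completeK (by omega) (by omega) (by omega), by simp⟩
    · exact mem_vset.2 ⟨{i, 0}, pair_mem_completeK hi (by omega) (by omega), by simp⟩

lemma eq_pair_of_card_two {s : Finset ℕ} (h : s.card = 2) {x y : ℕ}
    (hx : x ∈ s) (hy : y ∈ s) (hxy : x ≠ y) : s = {x, y} := by
  rcases Finset.card_eq_two.1 h with ⟨u, w, huw, rfl⟩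
  simp only [Finset.mem_insert, Finset.mem_singleton] at hx hy
  rcases hx with rfl | rfl <;> rcases hy with rfl | rfl <;>
    first
      | exact absurd rfl hxy
      | rfl
      | rw [Finset.pair_comm]

lemma exists_pair_of_mem {s : Finset ℕ} (h : s.card = 2) {x : ℕ} (hx : x ∈ s) :
    ∃ y, y ≠ x ∧ s = {x, y} := by
  rcases Finset.card_eq_two.1 h with ⟨u, w, huw, rfl⟩
  simp only [Finset.mem_insert, Finset.mem_singleton] at hx
  rcases hx with rfl | rfl
  · exact ⟨w, huw.symm, rfl⟩
  · exact ⟨u, huw, Finset.pair_comm u x⟩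

/-- `S` is a clique for the relation `P`. -/
def IsClq (P : ℕ → ℕ → Prop) (S : Finset ℕ) : Prop :=
  ∀ x ∈ S, ∀ y ∈ S, x ≠ y → P x y

lemma IsClq.mono {P : ℕ → ℕ → Prop} {S T : Finset ℕ} (h : IsClq P T) (hST : S ⊆ T) :
    IsClq P S := fun x hx y hy hxy => h x (hST hx) y (hST hy) hxy

lemma exists_enum (S : Finset ℕ) (a : ℕ) (h : S.card = a) :
    ∃ f : ℕ → ℕ, Set.InjOn f (Finset.range a) ∧ (∀ i < a, f i ∈ S) ∧
      (∀ s ∈ S, ∃ i < a, f i = s) := by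
  refine ⟨fun n => if hn : n < a then S.orderEmbOfFin h ⟨n, hn⟩ else 0, ?_, ?_, ?_⟩
  · intro i hi j hj hij
    simp only [Finset.coe_range, Set.mem_Iio] at hi hj
    simp only [dif_pos hi, dif_pos hj] at hij
    have := (S.orderEmbOfFin h).injective hij
    exact congrArg Fin.val this
  · intro i hi
    simp only [dif_pos hi]
    exact S.orderEmbOfFin_mem h ⟨i, hi⟩
  · intro s hs
    have : s ∈ Set.range (S.orderEmbOfFin h) := by
      rw [Finset.range_orderEmbOfFin]; exact_mod_cast hs
    rcases this with ⟨⟨i, hi⟩, rfl⟩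
    exact ⟨i, hi, by simp only [dif_pos hi]⟩

end Helpers
section Helly

lemma clique_helly_aux (a : ℕ) (P : ℕ → ℕ → Prop)
    (hsym : ∀ x y, P x y → P y x) (V : Finset ℕ) (hV : V.card + 3 ≤ 2 * a)
    (hno : ∀ S ⊆ V, IsClq P S → S.card + 1 ≤ a) :
    ∀ n (T U : Finset ℕ), T.card = n → T.Nonempty → T ⊆ U → U ⊆ V → IsClq P T →
      (∀ x ∈ U, ∀ y ∈ T, x ≠ y → P x y) → 2 * a ≤ U.card + T.card + 2 →
      ∃ u, ∀ C ⊆ V, C.card = a - 1 → IsClq P C → u ∈ C := by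
  intro n
  induction n using Nat.strong_induction_on with
  | _ n ih =>
    intro T U hTn hTne hTU hUV hTclq hadj hsum
    by_cases hall : ∀ C ⊆ V, C.card = a - 1 → IsClq P C → T ⊆ C
    · obtain ⟨u, hu⟩ := hTne
      exact ⟨u, fun C hCV hCcard hCclq => hall C hCV hCcard hCclq hu⟩
    · push_neg at hall
      obtain ⟨C, hCV, hCcard, hCclq, hTC⟩ := hall
      -- S := (C ∩ U) ∪ T is a clique
      have hSclq : IsClq P ((C ∩ U) ∪ T) := by
        intro x hx y hy hxy
        rw [Finset.mem_union] at hx hy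
        rcases hx with hx | hx <;> rcases hy with hy | hy
        · rw [Finset.mem_inter] at hx hy
          exact hCclq x hx.1 y hy.1 hxy
        · exact hadj x (Finset.mem_of_mem_inter_right hx) y hy hxy
        · exact hsym y x (hadj y (Finset.mem_of_mem_inter_right hy) x hx hxy.symm)
        · exact hTclq x hx y hy hxy
      have hSV : (C ∩ U) ∪ T ⊆ V :=
        Finset.union_subset (fun x hx => hCV (Finset.mem_of_mem_inter_left hx))
          (fun x hx => hUV (hTU hx))
      have hS := hno _ hSV hSclq
      have hSeq : (C ∩ U) ∪ T = (C ∩ U) ∪ (T \ C) := by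
        ext x
        simp only [Finset.mem_union, Finset.mem_inter, Finset.mem_sdiff]
        constructor
        · rintro (⟨h1, h2⟩ | hx)
          · exact Or.inl ⟨h1, h2⟩
          · by_cases hxC : x ∈ C
            · exact Or.inl ⟨hxC, hTU hx⟩
            · exact Or.inr ⟨hx, hxC⟩
        · rintro (⟨h1, h2⟩ | ⟨h1, _⟩)
          · exact Or.inl ⟨h1, h2⟩
          · exact Or.inr h1
      have hdisj : Disjoint (C ∩ U) (T \ C) := by
        rw [Finset.disjoint_left]
        intro x hx hx'
        exact (Finset.mem_sdiff.1 hx').2 (Finset.mem_of_mem_inter_left hx)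
      have hScard : ((C ∩ U) ∪ T).card = (C ∩ U).card + (T \ C).card := by
        rw [hSeq, Finset.card_union_of_disjoint hdisj]
      have h2 : (C ∩ U).card + (C \ U).card = C.card := Finset.card_inter_add_card_sdiff C U
      have h3 : (C \ U).card + U.card ≤ V.card := by
        rw [Finset.card_sdiff_add_card]
        exact Finset.card_le_card (Finset.union_subset hCV hUV)
      have h4 : (T ∩ C).card + (T \ C).card = T.card := Finset.card_inter_add_card_sdiff T C
      by_cases hTC0 : (T ∩ C).Nonempty
      · -- recurse with T' = T ∩ C, U' = U ∪ C
        have hT'lt : (T ∩ C).card < n := by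
          rw [← hTn]
          apply Finset.card_lt_card
          rw [Finset.ssubset_iff_subset_ne]
          refine ⟨Finset.inter_subset_left, fun hEq => hTC ?_⟩
          intro x hx
          have : x ∈ T ∩ C := by rw [hEq]; exact hx
          exact (Finset.mem_inter.1 this).2
        have hU'card : (C \ U).card + U.card = (U ∪ C).card := by
          rw [Finset.card_sdiff_add_card, Finset.union_comm]
        have harg1 : T ∩ C ⊆ U ∪ C := fun x hx =>
          Finset.mem_union_left _ (hTU (Finset.mem_inter.1 hx).1)
        have harg2 : IsClq P (T ∩ C) := hTclq.mono Finset.inter_subset_left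
        have harg3 : ∀ x ∈ U ∪ C, ∀ y ∈ T ∩ C, x ≠ y → P x y := by
          intro x hx y hy hxy
          rcases Finset.mem_union.1 hx with hx' | hx'
          · exact hadj x hx' y (Finset.mem_inter.1 hy).1 hxy
          · exact hCclq x hx' y (Finset.mem_inter.1 hy).2 hxy
        exact ih _ hT'lt (T ∩ C) (U ∪ C) rfl hTC0 harg1 (Finset.union_subset hUV hCV)
          harg2 harg3 (by omega)
      · -- T ∩ C = ∅ : contradiction
        exfalso
        have h5 : (T ∩ C).card = 0 := by
          rw [Finset.not_nonempty_iff_eq_empty] at hTC0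
          rw [hTC0, Finset.card_empty]
        omega

lemma clique_helly (a : ℕ) (P : ℕ → ℕ → Prop)
    (hsym : ∀ x y, P x y → P y x) (V : Finset ℕ) (hV : V.card + 3 ≤ 2 * a)
    (hno : ∀ S ⊆ V, IsClq P S → S.card + 1 ≤ a)
    (C0 : Finset ℕ) (hC0V : C0 ⊆ V) (hC0card : C0.card = a - 1) (hC0clq : IsClq P C0) :
    ∃ u, ∀ C ⊆ V, C.card = a - 1 → IsClq P C → u ∈ C := by
  have hle := Finset.card_le_card hC0V
  refine clique_helly_aux a P hsym V hV hno C0.card C0 C0 rfl ?_ (le_refl _) hC0V hC0clq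
    (fun x hx y hy hxy => hC0clq x hx y hy hxy) (by omega)
  rw [← Finset.card_pos]; omega

end Helly
section Copies

lemma exists_copy_completeK (a : ℕ) (ha : 2 ≤ a) (S : Finset ℕ) (hcard : S.card = a)
    (Q : Finset ℕ → Prop)
    (hpair : ∀ x ∈ S, ∀ y ∈ S, x ≠ y → Q {x, y}) :
    ∃ K : HG, IsCopy (completeK a) K ∧ ∀ e ∈ K, Q e := by
  obtain ⟨f, hinj, hmem, _⟩ := exists_enum S a hcard
  refine ⟨(completeK a).image (fun e => e.image f),
    ⟨f, by rw [vset_completeK ha]; exact hinj, rfl⟩, ?_⟩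
  intro e he
  rw [Finset.mem_image] at he
  obtain ⟨e0, he0, rfl⟩ := he
  obtain ⟨hsub, hc2⟩ := mem_completeK.1 he0
  obtain ⟨i, j, hij, rfl⟩ := Finset.card_eq_two.1 hc2
  have hi : i < a := Finset.mem_range.1 (hsub (by simp))
  have hj : j < a := Finset.mem_range.1 (hsub (by simp))
  have himg : ({i, j} : Finset ℕ).image f = {f i, f j} := by
    simp [Finset.image_insert, Finset.image_singleton]
  rw [himg]
  refine hpair _ (hmem i hi) _ (hmem j hj) ?_
  intro h
  exact hij (hinj (by simp [hi]) (by simp [hj]) h)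

lemma copy_completeK_spec {a : ℕ} (ha : 2 ≤ a) {K : HG} (h : IsCopy (completeK a) K) :
    ∃ f : ℕ → ℕ, Set.InjOn f (Finset.range a) ∧
      (∀ e ∈ K, ∃ i j, i < a ∧ j < a ∧ i ≠ j ∧ e = {f i, f j}) ∧
      (∀ i j, i < a → j < a → i ≠ j → ({f i, f j} : Finset ℕ) ∈ K) := by
  obtain ⟨f, hinj, hKeq⟩ := h
  rw [vset_completeK ha] at hinj
  refine ⟨f, hinj, ?_, ?_⟩
  · intro e he
    rw [hKeq, Finset.mem_image] at he
    obtain ⟨e0, he0, rfl⟩ := he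
    obtain ⟨hsub, hc2⟩ := mem_completeK.1 he0
    obtain ⟨i, j, hij, rfl⟩ := Finset.card_eq_two.1 hc2
    have hi : i < a := Finset.mem_range.1 (hsub (by simp))
    have hj : j < a := Finset.mem_range.1 (hsub (by simp))
    exact ⟨i, j, hi, hj, hij, by simp [Finset.image_insert, Finset.image_singleton]⟩
  · intro i j hi hj hij
    rw [hKeq, Finset.mem_image]
    exact ⟨{i, j}, pair_mem_completeK hi hj hij,
      by simp [Finset.image_insert, Finset.image_singleton]⟩

end Copies
/-- If `G` is Ramsey-minimal for `(K_a, H₂)` with `a ≥ 3` and `δ(H₂) ≥ 2`,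
then `δ(G) ≥ 2(a-1)`. -/
theorem ramsey_minimal_min_degree (a : ℕ) (ha : 3 ≤ a) (G H2 : HG)
    (hG : IsUniform 2 G) (hH2 : IsUniform 2 H2)
    (hδ : ∀ v ∈ vset H2, 2 ≤ deg H2 v)
    (harrow : Arrow2 G (completeK a) H2)
    (hminimal : ∀ G' : HG, G' ⊂ G → ¬ Arrow2 G' (completeK a) H2) :
    ∀ v ∈ vset G, 2 * (a - 1) ≤ deg G v := by
  intro v hv
  by_contra hdeg
  push_neg at hdeg
  classical
  set G' : HG := G.filter (fun e => v ∉ e) with hG'def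
  have hG'G : G' ⊆ G := Finset.filter_subset _ _
  obtain ⟨ev, hevG, hvev⟩ := mem_vset.1 hv
  have hG'ss : G' ⊂ G := by
    rw [Finset.ssubset_iff_of_subset hG'G]
    exact ⟨ev, hevG, by simp [hG'def, Finset.mem_filter, hvev]⟩
  have hnA := hminimal G' hG'ss
  rw [Arrow2, not_forall] at hnA
  obtain ⟨c, hc⟩ := hnA
  rw [not_or] at hc
  obtain ⟨hred, hblue⟩ := hc
  -- the neighbourhood of v
  set N : Finset ℕ := (G.filter (fun e => v ∈ e)).biUnion (fun e => e.erase v) with hNdef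
  have hNcard : N.card ≤ deg G v := by
    calc N.card ≤ ∑ e ∈ G.filter (fun e => v ∈ e), (e.erase v).card :=
          Finset.card_biUnion_le
      _ ≤ ∑ _e ∈ G.filter (fun e => v ∈ e), 1 := by
          apply Finset.sum_le_sum
          intro e he
          rw [Finset.mem_filter] at he
          have := Finset.card_erase_of_mem he.2
          rw [hG e he.1] at this
          omega
      _ = deg G v := by
          rw [Finset.sum_const, smul_eq_mul, mul_one]
          rfl
  have hNmem : ∀ u, u ∈ N ↔ (u ≠ v ∧ ({v, u} : Finset ℕ) ∈ G) := by
    intro u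
    constructor
    · intro hu
      rw [hNdef, Finset.mem_biUnion] at hu
      obtain ⟨e, he, hue⟩ := hu
      rw [Finset.mem_filter] at he
      rw [Finset.mem_erase] at hue
      refine ⟨hue.1, ?_⟩
      rw [← eq_pair_of_card_two (hG e he.1) he.2 hue.2 (Ne.symm hue.1)]
      exact he.1
    · rintro ⟨huv, hpG⟩
      rw [hNdef, Finset.mem_biUnion]
      exact ⟨{v, u}, Finset.mem_filter.2 ⟨hpG, by simp⟩,
        Finset.mem_erase.2 ⟨huv, by simp⟩⟩
  -- red adjacency away from v
  set P : ℕ → ℕ → Prop := fun x y => x ≠ y ∧ ({x, y} : Finset ℕ) ∈ G ∧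
      v ∉ ({x, y} : Finset ℕ) ∧ c {x, y} = true with hPdef
  have hPsym : ∀ x y, P x y → P y x := by
    intro x y h
    obtain ⟨h1, h2, h3, h4⟩ := h
    exact ⟨h1.symm, by rwa [Finset.pair_comm y x], by rwa [Finset.pair_comm y x],
      by rwa [Finset.pair_comm y x]⟩
  -- no red clique of size a in N
  have hno : ∀ S ⊆ N, IsClq P S → S.card + 1 ≤ a := by
    intro S hSN hSclq
    by_contra hcon
    push_neg at hcon
    obtain ⟨S', hS'S, hS'card⟩ := Finset.exists_subset_card_eq (s := S) (n := a) (by omega)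
    have hclq' : IsClq P S' := hSclq.mono hS'S
    have hpair : ∀ x ∈ S', ∀ y ∈ S', x ≠ y → (({x, y} : Finset ℕ) ∈ G' ∧ c {x, y} = true) := by
      intro x hx y hy hxy
      obtain ⟨h1, h2, h3, h4⟩ := hclq' x hx y hy hxy
      exact ⟨by simp only [hG'def, Finset.mem_filter]; exact ⟨h2, h3⟩, h4⟩
    obtain ⟨K, hKcopy, hKQ⟩ := exists_copy_completeK a (by omega) S' hS'card
      (fun e => e ∈ G' ∧ c e = true) hpair
    exact hred ⟨K, hKcopy, fun e he => (hKQ e he).1, fun e he => (hKQ e he).2⟩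
  -- common vertex of all red (a-1)-cliques in N
  have huex : ∃ u, ∀ C ⊆ N, C.card = a - 1 → IsClq P C → u ∈ C := by
    by_cases hex : ∃ C, C ⊆ N ∧ C.card = a - 1 ∧ IsClq P C
    · obtain ⟨C0, h1, h2, h3⟩ := hex
      exact clique_helly a P hPsym N (by omega) hno C0 h1 h2 h3
    · exact ⟨0, fun C hC h1 h2 => absurd ⟨C, hC, h1, h2⟩ hex⟩
  obtain ⟨u, hu⟩ := huex
  -- the extended colouring
  set c' : Finset ℕ → Bool :=
    fun e => if v ∈ e then (if e = {v, u} then false else true) else c e with hc'def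
  have hc'not : ∀ e, v ∉ e → c' e = c e := by
    intro e he; simp [hc'def, he]
  have hc'vu : ∀ e, v ∈ e → e ≠ ({v, u} : Finset ℕ) → c' e = true := by
    intro e h1 h2; simp [hc'def, h1, h2]
  have hc'u : c' {v, u} = false := by simp [hc'def]
  have hc'false : ∀ e, v ∈ e → c' e = false → e = ({v, u} : Finset ℕ) := by
    intro e h1 h2
    by_contra h3
    rw [hc'vu e h1 h3] at h2
    exact Bool.noConfusion h2
  rcases harrow c' with ⟨K, hKcopy, hKG, hKcol⟩ | ⟨K, hKcopy, hKG, hKcol⟩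
  · -- red K_a in G
    obtain ⟨f, hinj, hKdec, hKpairs⟩ := copy_completeK_spec (by omega) hKcopy
    by_cases hvK : v ∈ vset K
    · obtain ⟨e1, he1K, hve1⟩ := mem_vset.1 hvK
      obtain ⟨i0, j0, hi0, hj0, hij0, he1eq⟩ := hKdec e1 he1K
      have hmain : ∀ i, i < a → v = f i → False := by
        intro i hi hvfi
        have hvne : ∀ p, p < a → p ≠ i → v ≠ f p := by
          intro p hp hpi h
          rw [hvfi] at h
          exact hpi ((hinj (by simp [hi]) (by simp [hp]) h).symm)
        set S : Finset ℕ := ((Finset.range a).erase i).image f with hSdef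
        have hSsub : ∀ x ∈ S, ∃ j, j < a ∧ j ≠ i ∧ x = f j := by
          intro x hx
          rw [hSdef, Finset.mem_image] at hx
          obtain ⟨j, hj, rfl⟩ := hx
          rw [Finset.mem_erase, Finset.mem_range] at hj
          exact ⟨j, hj.2, hj.1, rfl⟩
        have hScard : S.card = a - 1 := by
          rw [hSdef, Finset.card_image_of_injOn
            (hinj.mono (Finset.coe_subset.2 (Finset.erase_subset _ _))),
            Finset.card_erase_of_mem (Finset.mem_range.2 hi), Finset.card_range]
        have hfjN : ∀ j, j < a → j ≠ i → f j ∈ N ∧ ({v, f j} : Finset ℕ) ∈ K := by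
          intro j hj hji
          have hpK : ({f i, f j} : Finset ℕ) ∈ K :=
            hKpairs i j hi hj (fun h => hji h.symm)
          have hpK' : ({v, f j} : Finset ℕ) ∈ K := by rw [hvfi]; exact hpK
          exact ⟨(hNmem (f j)).2 ⟨fun h => hvne j hj hji h.symm, hKG hpK'⟩, hpK'⟩
        have hSN : S ⊆ N := by
          intro x hx
          obtain ⟨j, hj, hji, rfl⟩ := hSsub x hx
          exact (hfjN j hj hji).1
        have hSclq : IsClq P S := by
          intro x hx y hy hxy
          obtain ⟨p, hp, hpi, rfl⟩ := hSsub x hx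
          obtain ⟨q, hq, hqi, rfl⟩ := hSsub y hy
          have hpq : p ≠ q := fun h => hxy (by rw [h])
          have hpK : ({f p, f q} : Finset ℕ) ∈ K := hKpairs p q hp hq hpq
          have hvp : v ∉ ({f p, f q} : Finset ℕ) := by
            simp only [Finset.mem_insert, Finset.mem_singleton]
            push_neg
            exact ⟨hvne p hp hpi, hvne q hq hqi⟩
          refine ⟨hxy, hKG hpK, hvp, ?_⟩
          have hcol := hKcol _ hpK
          rwa [hc'not _ hvp] at hcol
        have huS : u ∈ S := hu S hSN hScard hSclq
        obtain ⟨j, hj, hji, hufj⟩ := hSsub u huS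
        have hpK := (hfjN j hj hji).2
        have hcol := hKcol _ hpK
        rw [hufj] at hc'u
        rw [hcol] at hc'u
        exact Bool.noConfusion hc'u
      rw [he1eq] at hve1
      rcases Finset.mem_insert.1 hve1 with h | h
      · exact hmain i0 hi0 h
      · exact hmain j0 hj0 (Finset.mem_singleton.1 h)
    · refine hred ⟨K, hKcopy, ?_, ?_⟩
      · intro e he
        have hvne : v ∉ e := fun hv' => hvK (mem_vset.2 ⟨e, he, hv'⟩)
        simp only [hG'def, Finset.mem_filter]
        exact ⟨hKG he, hvne⟩
      · intro e he
        have hvne : v ∉ e := fun hv' => hvK (mem_vset.2 ⟨e, he, hv'⟩)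
        rw [← hc'not e hvne]
        exact hKcol e he
  · -- blue H2 in G
    obtain ⟨f, hinjH, hKeq⟩ := hKcopy
    by_cases hvK : v ∈ vset K
    · obtain ⟨e1', he1K, hve1⟩ := mem_vset.1 hvK
      rw [hKeq, Finset.mem_image] at he1K
      obtain ⟨e0, he0, rfl⟩ := he1K
      rw [Finset.mem_image] at hve1
      obtain ⟨i, hie0, hfiv⟩ := hve1
      have hivs : i ∈ vset H2 := mem_vset.2 ⟨e0, he0, hie0⟩
      have hdeg2 := hδ i hivs
      rw [HG.deg] at hdeg2
      obtain ⟨e1, he1, e2, he2, hne⟩ := (Finset.one_lt_card (s := H2.filter (fun e => i ∈ e))).1 (by omega)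
      have key : ∀ e ∈ H2.filter (fun e => i ∈ e),
          ∃ j, j ∈ vset H2 ∧ j ≠ i ∧ f j = u ∧ e = {i, j} := by
        intro e he
        rw [Finset.mem_filter] at he
        obtain ⟨j, hji, heq⟩ := exists_pair_of_mem (hH2 e he.1) he.2
        have hjvs : j ∈ vset H2 := mem_vset.2 ⟨e, he.1, by rw [heq]; simp⟩
        have himg : ({v, f j} : Finset ℕ) ∈ K := by
          rw [hKeq, Finset.mem_image]
          refine ⟨e, he.1, ?_⟩
          rw [heq]
          simp [Finset.image_insert, Finset.image_singleton, hfiv]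
        have hcol := hKcol _ himg
        have hfjv : f j ≠ v := by
          rw [← hfiv]
          intro h
          exact hji (hinjH hjvs hivs h)
        have hvin : v ∈ ({v, f j} : Finset ℕ) := by simp
        have h5 := hc'false _ hvin hcol
        have hfju : f j = u := by
          have h6 : f j ∈ ({v, u} : Finset ℕ) := by
            rw [← h5]; simp
          rcases Finset.mem_insert.1 h6 with h | h
          · exact absurd h hfjv
          · exact Finset.mem_singleton.1 h
        exact ⟨j, hjvs, hji, hfju, heq⟩
      obtain ⟨j1, hj1vs, hj1i, hj1u, he1eq⟩ := key e1 he1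
      obtain ⟨j2, hj2vs, hj2i, hj2u, he2eq⟩ := key e2 he2
      have hj12 : j1 = j2 := hinjH hj1vs hj2vs (by rw [hj1u, hj2u])
      exact hne (by rw [he1eq, he2eq, hj12])
    · refine hblue ⟨K, ⟨f, hinjH, hKeq⟩, ?_, ?_⟩
      · intro e he
        have hvne : v ∉ e := fun hv' => hvK (mem_vset.2 ⟨e, he, hv'⟩)
        simp only [hG'def, Finset.mem_filter]
        exact ⟨hKG he, hvne⟩
      · intro e he
        have hvne : v ∉ e := fun hv' => hvK (mem_vset.2 ⟨e, he, hv'⟩)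
        rw [← hc'not e hvne]
        exact hKcol e he
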